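/- arXiv:2502.16545 — 4 statements merged into one kernel-verified Lean document; each statement's English description precedes it below -/
import Mathlib

section
/- Let H be a real inner product space, P ≥ 1, and for p = 1,…,P let L_p : H → ℝ be differentiable functions, each satisfying the L-smoothness inequality L_p(v) ≤ L_p(w) + ⟨v − w, ∇L_p(w)⟩ + (L/2)‖v − w‖² and the μ-strong convexity inequality L_p(v) ≥ L_p(w) + ⟨v − w, ∇L_p(w)⟩ + (μ/2)‖v − w‖² for all v, w ∈ H, where L ≥ μ > 0. Let w_1,…,w_P ≥ 0 with Σ_p w_p = 1, define the global objective 𝓛(x) = Σ_p w_p L_p(x), let δ* be a global minimizer of 𝓛 with 𝓛* = 𝓛(δ*), suppose each L_p is bounded below with infimum L_p*, and set Γ = 𝓛* − Σ_p w_p L_p* . Let δ_1,…,δ_P ∈ H, let δ̄ = Σ_p w_p δ_p, let ḡ = Σ_p w_p ∇L_p(δ_p), and let 0 < α ≤ 1/(4L). Then ‖δ̄ − α ḡ − δ*‖² ≤ (1 − αμ)‖δ̄ − δ*‖² + 6Lα²Γ + 2 Σ_p w_p ‖δ̄ − δ_p‖². -/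
set_option maxHeartbeats 1000000


open InnerProductSpace Finset
open scoped RealInnerProductSpace

private lemma scalar_core (α L μ a t gq d e s f n I G : ℝ)
    (ht : 0 ≤ t)
    (hμ : 0 < μ) (hα0 : 0 < α) (hL : 0 < L) (hαL : α * L ≤ 1/4)
    (h2 : G ≤ gq)
    (h3 : gq ≤ 2*L*(d - s))
    (h4 : -t - α^2*gq + 2*α*(d - f) + α*μ*n ≤ 2*α*I)
    (h5 : a ≤ n)
    (h6 : 2*α*e - t - 2*α^2*L*(e - s) ≤ 2*α*d)
    (h7 : f ≤ e)
    (h8 : s ≤ f) :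
    a - 2*α*I + α^2*G ≤ (1 - α*μ)*a + 6*L*α^2*(f - s) + 2*t := by
  have hg1 : 0 ≤ 1 - 2*α*L := by nlinarith
  have A1 := mul_le_mul_of_nonneg_left h6 hg1
  have A2 : 0 ≤ 2*L*α*t := by positivity
  have A3 : 0 ≤ 2*α*(1 - α*L)*(1 - 2*α*L)*(e - f) := by
    have h9 : 0 ≤ 1 - α*L := by nlinarith
    have := sub_nonneg.2 h7
    positivity
  have A4 : 0 ≤ 4*L^2*α^3*(f - s) := by
    have := sub_nonneg.2 h8
    positivity
  have A5 : 0 ≤ α*μ*(n - a) := by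
    have := sub_nonneg.2 h5
    positivity
  have A6 : α^2*G ≤ α^2*gq := by nlinarith [sq_nonneg α]
  have A7 : 2*α^2*gq ≤ 2*α^2*(2*L*(d - s)) := by nlinarith [sq_nonneg α]
  nlinarith [A1, A2, A3, A4, A5, A6, A7, h4]

/-- One step of full-gradient descent in the FedAvg-style analysis: with `P`
local losses `Lf p` that are `L`-smooth and `μ`-strongly convex, weights `wt p`
summing to `1`, global minimizer `δ*`, infima `Lstar p` of the local losses,
local iterates `δ p` with weighted average `δ̄` and averaged gradient `ḡ`,
and step size `0 < α ≤ 1/(4L)`, one has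
`‖δ̄ − α ḡ − δ*‖² ≤ (1 − αμ)‖δ̄ − δ*‖² + 6Lα²Γ + 2 Σ_p wt_p ‖δ̄ − δ_p‖²`. -/
theorem one_step_sgd {H : Type*} [NormedAddCommGroup H] [InnerProductSpace ℝ H]
    (P : ℕ) (hP : 1 ≤ P) (Lf : Fin P → H → ℝ) (g : Fin P → H → H)
    (L μ : ℝ) (hμ : 0 < μ) (hLμ : μ ≤ L)
    (hgrad : ∀ (p : Fin P) (x : H),
      HasFDerivAt (Lf p) ((toDualMap ℝ H) (g p x) : H →L[ℝ] ℝ) x)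
    (hsmooth : ∀ (p : Fin P) (v u : H),
      Lf p v ≤ Lf p u + ⟪v - u, g p u⟫ + (L / 2) * ‖v - u‖ ^ 2)
    (hconv : ∀ (p : Fin P) (v u : H),
      Lf p v ≥ Lf p u + ⟪v - u, g p u⟫ + (μ / 2) * ‖v - u‖ ^ 2)
    (wt : Fin P → ℝ) (hwt : ∀ p, 0 ≤ wt p) (hwtsum : ∑ p, wt p = 1)
    (δstar : H) (hmin : ∀ x : H, (∑ p, wt p * Lf p δstar) ≤ ∑ p, wt p * Lf p x)
    (Lstar : Fin P → ℝ) (hLstar : ∀ p, IsGLB (Set.range (Lf p)) (Lstar p))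
    (δ : Fin P → H) (α : ℝ) (hα0 : 0 < α) (hα : α ≤ 1 / (4 * L)) :
    ‖(∑ p, wt p • δ p) - α • (∑ p, wt p • g p (δ p)) - δstar‖ ^ 2 ≤
      (1 - α * μ) * ‖(∑ p, wt p • δ p) - δstar‖ ^ 2
        + 6 * L * α ^ 2 * ((∑ p, wt p * Lf p δstar) - ∑ p, wt p * Lstar p)
        + 2 * ∑ p, wt p * ‖(∑ q, wt q • δ q) - δ p‖ ^ 2 := by
  have hL : 0 < L := hμ.trans_le hLμ
  have hαL : α * L ≤ 1/4 := by
    rw [le_div_iff₀ (by positivity : (0:ℝ) < 4 * L)] at hα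
    nlinarith
  set δbar : H := ∑ p, wt p • δ p with hδbar
  set gbar : H := ∑ p, wt p • g p (δ p) with hgbar
  -- gradient bound from smoothness
  have gradb : ∀ (p : Fin P) (x : H), ‖g p x‖^2 ≤ 2*L*(Lf p x - Lstar p) := by
    intro p x
    have hlb : Lstar p ≤ Lf p (x - (1/L) • g p x) := (hLstar p).1 ⟨_, rfl⟩
    have h := hsmooth p (x - (1/L) • g p x) x
    have hv : x - (1/L) • g p x - x = -((1/L) • g p x) := by abel
    rw [hv, norm_neg, norm_smul, inner_neg_left, real_inner_smul_left,
      real_inner_self_eq_norm_sq, Real.norm_eq_abs,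
      abs_of_pos (by positivity : (0:ℝ) < 1/L)] at h
    have hval : Lf p x + -(1/L * ‖g p x‖^2) + L/2 * (1/L * ‖g p x‖)^2
        = Lf p x - ‖g p x‖^2 / (2*L) := by
      field_simp; ring
    rw [hval] at h
    have h3 : ‖g p x‖^2 / (2*L) ≤ Lf p x - Lstar p := by linarith
    have := (div_le_iff₀ (by positivity : (0:ℝ) < 2*L)).mp h3
    linarith
  -- Jensen: squared norm of a weighted average
  have jensen : ∀ v : Fin P → H, ‖∑ p, wt p • v p‖^2 ≤ ∑ p, wt p * ‖v p‖^2 := by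
    intro v
    have h1 : ‖∑ p, wt p • v p‖ ≤ ∑ p, wt p * ‖v p‖ := by
      refine (norm_sum_le _ _).trans_eq ?_
      exact Finset.sum_congr rfl fun p _ => by
        rw [norm_smul, Real.norm_eq_abs, abs_of_nonneg (hwt p)]
    have h2 : (∑ p, wt p * ‖v p‖)^2 ≤ ∑ p, wt p * ‖v p‖^2 := by
      have hcs := Finset.sum_mul_sq_le_sq_mul_sq Finset.univ
        (fun p => Real.sqrt (wt p)) (fun p => Real.sqrt (wt p) * ‖v p‖)
      have e1 : ∀ p ∈ Finset.univ, Real.sqrt (wt p) * (Real.sqrt (wt p) * ‖v p‖)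
          = wt p * ‖v p‖ := fun p _ => by
        rw [← mul_assoc, Real.mul_self_sqrt (hwt p)]
      have e2 : ∀ p ∈ Finset.univ, Real.sqrt (wt p) ^ 2 = wt p := fun p _ =>
        Real.sq_sqrt (hwt p)
      have e3 : ∀ p ∈ Finset.univ, (Real.sqrt (wt p) * ‖v p‖) ^ 2 = wt p * ‖v p‖^2 :=
        fun p _ => by rw [mul_pow, Real.sq_sqrt (hwt p)]
      rw [Finset.sum_congr rfl e1, Finset.sum_congr rfl e2, Finset.sum_congr rfl e3,
        hwtsum, one_mul] at hcs
      exact hcs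
    calc ‖∑ p, wt p • v p‖^2 ≤ (∑ p, wt p * ‖v p‖)^2 :=
          pow_le_pow_left₀ (norm_nonneg _) h1 2
      _ ≤ _ := h2
  -- expansion of the step
  have key : ‖δbar - α • gbar - δstar‖^2
      = ‖δbar - δstar‖^2 - 2*α*(∑ p, wt p * ⟪δbar - δstar, g p (δ p)⟫)
        + α^2*‖gbar‖^2 := by
    have h1 : δbar - α • gbar - δstar = (δbar - δstar) - α • gbar := by abel
    have h2 : ⟪δbar - δstar, gbar⟫ = ∑ p, wt p * ⟪δbar - δstar, g p (δ p)⟫ := by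
      rw [hgbar, inner_sum]
      exact Finset.sum_congr rfl fun p _ => real_inner_smul_right _ _ _
    rw [h1, norm_sub_sq_real, real_inner_smul_right, h2, norm_smul,
      Real.norm_eq_abs, mul_pow, sq_abs]
    ring
  -- h4 : lower bound for the inner-product sum
  have h4p : ∀ p : Fin P,
      wt p * (-(‖δbar - δ p‖^2) - α^2*‖g p (δ p)‖^2
        + 2*α*(Lf p (δ p) - Lf p δstar) + α*μ*‖δ p - δstar‖^2)
      ≤ wt p * (2*α*⟪δbar - δstar, g p (δ p)⟫) := by
    intro p
    refine mul_le_mul_of_nonneg_left ?_ (hwt p)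
    have split : ⟪δbar - δstar, g p (δ p)⟫
        = ⟪δbar - δ p, g p (δ p)⟫ + ⟪δ p - δstar, g p (δ p)⟫ := by
      rw [← inner_add_left]; congr 1; abel
    have b1 : -(‖δbar - δ p‖^2) - α^2*‖g p (δ p)‖^2 ≤ 2*α*⟪δbar - δ p, g p (δ p)⟫ := by
      have h0 : (0:ℝ) ≤ ‖(δbar - δ p) + α • g p (δ p)‖^2 := sq_nonneg _
      rw [norm_add_sq_real, real_inner_smul_right, norm_smul, Real.norm_eq_abs,
        mul_pow, sq_abs] at h0
      nlinarith
    have b2 := hconv p δstar (δ p)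
    have e1 : ⟪δstar - δ p, g p (δ p)⟫ = -⟪δ p - δstar, g p (δ p)⟫ := by
      rw [← inner_neg_left]; congr 1; abel
    have e2 : ‖δstar - δ p‖ = ‖δ p - δstar‖ := norm_sub_rev _ _
    rw [e1, e2] at b2
    have b2' : Lf p (δ p) - Lf p δstar + μ/2*‖δ p - δstar‖^2
        ≤ ⟪δ p - δstar, g p (δ p)⟫ := by linarith
    have b2'' := mul_le_mul_of_nonneg_left b2' (by positivity : (0:ℝ) ≤ 2*α)
    rw [split]; nlinarith [b1, b2'']
  have h4 : -(∑ p, wt p * ‖δbar - δ p‖^2)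
        - α^2*(∑ p, wt p * ‖g p (δ p)‖^2)
        + 2*α*((∑ p, wt p * Lf p (δ p)) - (∑ p, wt p * Lf p δstar))
        + α*μ*(∑ p, wt p * ‖δ p - δstar‖^2)
      ≤ 2*α*(∑ p, wt p * ⟪δbar - δstar, g p (δ p)⟫) := by
    have hs := Finset.sum_le_sum fun p (_ : p ∈ Finset.univ) => h4p p
    calc _ = ∑ p, wt p * (-(‖δbar - δ p‖^2) - α^2*‖g p (δ p)‖^2
          + 2*α*(Lf p (δ p) - Lf p δstar) + α*μ*‖δ p - δstar‖^2) := by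
          simp only [Finset.mul_sum, ← Finset.sum_neg_distrib, ← Finset.sum_sub_distrib,
            ← Finset.sum_add_distrib]
          exact Finset.sum_congr rfl fun p _ => by ring
      _ ≤ ∑ p, wt p * (2*α*⟪δbar - δstar, g p (δ p)⟫) := hs
      _ = _ := by
          rw [Finset.mul_sum]
          exact Finset.sum_congr rfl fun p _ => by ring
  -- h6 : local-vs-average objective bound
  have h6p : ∀ p : Fin P,
      wt p * (2*α*Lf p δbar - ‖δbar - δ p‖^2 - 2*α^2*L*(Lf p δbar - Lstar p))
      ≤ wt p * (2*α*Lf p (δ p)) := by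
    intro p
    refine mul_le_mul_of_nonneg_left ?_ (hwt p)
    have c1 := hconv p (δ p) δbar
    have c1' : Lf p δbar + ⟪δ p - δbar, g p δbar⟫ ≤ Lf p (δ p) := by
      nlinarith [c1, sq_nonneg ‖δ p - δbar‖]
    have b1 : -(‖δ p - δbar‖^2) - α^2*‖g p δbar‖^2 ≤ 2*α*⟪δ p - δbar, g p δbar⟫ := by
      have h0 : (0:ℝ) ≤ ‖(δ p - δbar) + α • g p δbar‖^2 := sq_nonneg _
      rw [norm_add_sq_real, real_inner_smul_right, norm_smul, Real.norm_eq_abs,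
        mul_pow, sq_abs] at h0
      nlinarith
    have gb := gradb p δbar
    have gb' := mul_le_mul_of_nonneg_left gb (sq_nonneg α)
    have c1'' := mul_le_mul_of_nonneg_left c1' (by positivity : (0:ℝ) ≤ 2*α)
    have hT : ‖δbar - δ p‖^2 = ‖δ p - δbar‖^2 := by rw [norm_sub_rev]
    nlinarith [b1, gb', c1'']
  have h6 : 2*α*(∑ p, wt p * Lf p δbar) - (∑ p, wt p * ‖δbar - δ p‖^2)
        - 2*α^2*L*((∑ p, wt p * Lf p δbar) - (∑ p, wt p * Lstar p))
      ≤ 2*α*(∑ p, wt p * Lf p (δ p)) := by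
    have hs := Finset.sum_le_sum fun p (_ : p ∈ Finset.univ) => h6p p
    calc _ = ∑ p, wt p * (2*α*Lf p δbar - ‖δbar - δ p‖^2
          - 2*α^2*L*(Lf p δbar - Lstar p)) := by
          simp only [Finset.mul_sum, ← Finset.sum_sub_distrib]
          exact Finset.sum_congr rfl fun p _ => by ring
      _ ≤ ∑ p, wt p * (2*α*Lf p (δ p)) := hs
      _ = _ := by
          rw [Finset.mul_sum]
          exact Finset.sum_congr rfl fun p _ => by ring
  -- h5 : Jensen on δ p - δstar
  have hsumδ : ∑ p, wt p • (δ p - δstar) = δbar - δstar := by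
    rw [hδbar]
    simp only [smul_sub]
    rw [Finset.sum_sub_distrib, ← Finset.sum_smul, hwtsum, one_smul]
  have h5 : ‖δbar - δstar‖^2 ≤ ∑ p, wt p * ‖δ p - δstar‖^2 := by
    rw [← hsumδ]; exact jensen _
  -- remaining facts
  have h2 : ‖gbar‖^2 ≤ ∑ p, wt p * ‖g p (δ p)‖^2 := jensen _
  have h3 : (∑ p, wt p * ‖g p (δ p)‖^2)
      ≤ 2*L*((∑ p, wt p * Lf p (δ p)) - ∑ p, wt p * Lstar p) := by
    have hs := Finset.sum_le_sum fun p (_ : p ∈ Finset.univ) =>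
      mul_le_mul_of_nonneg_left (gradb p (δ p)) (hwt p)
    calc (∑ p, wt p * ‖g p (δ p)‖^2)
        ≤ ∑ p, wt p * (2*L*(Lf p (δ p) - Lstar p)) := hs
      _ = _ := by
          simp only [Finset.mul_sum, ← Finset.sum_sub_distrib]
          exact Finset.sum_congr rfl fun p _ => by ring
  have h7 : (∑ p, wt p * Lf p δstar) ≤ ∑ p, wt p * Lf p δbar := hmin δbar
  have h8 : (∑ p, wt p * Lstar p) ≤ ∑ p, wt p * Lf p δstar :=
    Finset.sum_le_sum fun p _ =>
      mul_le_mul_of_nonneg_left ((hLstar p).1 ⟨δstar, rfl⟩) (hwt p)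
  have ht : 0 ≤ ∑ p, wt p * ‖δbar - δ p‖^2 :=
    Finset.sum_nonneg fun p _ => mul_nonneg (hwt p) (sq_nonneg _)
  rw [key]
  exact scalar_core α L μ (‖δbar - δstar‖^2) (∑ p, wt p * ‖δbar - δ p‖^2)
    (∑ p, wt p * ‖g p (δ p)‖^2) (∑ p, wt p * Lf p (δ p)) (∑ p, wt p * Lf p δbar)
    (∑ p, wt p * Lstar p) (∑ p, wt p * Lf p δstar) (∑ p, wt p * ‖δ p - δstar‖^2)
    (∑ p, wt p * ⟪δbar - δstar, g p (δ p)⟫) (‖gbar‖^2)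
    ht hμ hα0 hL hαL h2 h3 h4 h5 h6 h7 h8
end

section
/- Let H be a real inner product space, P ≥ 1, let w_1,…,w_P ≥ 0 with Σ_p w_p = 1, let G ≥ 0, let E ≥ 1 be a natural number, and let (α_s)_{s ≥ 1} be a non-increasing sequence of nonnegative step sizes. For each p, let (δ_p^s)_{s ≥ 1} be a sequence in H evolving by δ_p^{s+1} = δ_p^s − α_s g_p^s with ‖g_p^s‖ ≤ G for all s. Suppose there exist integers t_0 ≤ t with t − t_0 ≤ E − 1 such that all δ_p^{t_0} are equal (the sequences are synchronized at step t_0) and α_{t_0} ≤ 2 α_t. Then Σ_{p=1}^P w_p ‖δ̄^t − δ_p^t‖² ≤ 4 α_t² (E − 1)² G², where δ̄^t = Σ_{p=1}^P w_p δ_p^t. -/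
/-!
Starting from the common point `δ_p^{t₀}`, each client takes at most `E - 1` steps of length
at most `α_{t₀} G ≤ 2 α_t G`, so every `δ_p^t` lies within `B = 2 α_t (E - 1) G` of that point.
The weighted mean minimizes `c ↦ ∑ w_p ‖c - δ_p^t‖²`, so the spread around it is at most `B²`.
-/

open Finset

section GradientSteps

variable {F : Type*} [SeminormedAddCommGroup F] [NormedSpace ℝ F]

theorem norm_sub_le_of_gradient_steps {x g : ℕ → F} {α : ℕ → ℝ} {a b : ℕ} {A G : ℝ}
    (hab : a ≤ b)
    (hstep : ∀ s, a ≤ s → s < b → x (s + 1) = x s - α s • g s)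
    (hα : ∀ s, a ≤ s → s < b → 0 ≤ α s ∧ α s ≤ A)
    (hg : ∀ s, a ≤ s → s < b → ‖g s‖ ≤ G) :
    ‖x b - x a‖ ≤ (b - a : ℕ) * (A * G) := by
  rw [← dist_eq_norm, dist_comm]
  calc dist (x a) (x b) ≤ ∑ _ ∈ Ico a b, A * G := by
        refine dist_le_Ico_sum_of_dist_le hab fun {s} has hsb => ?_
        obtain ⟨hα0, hαA⟩ := hα s has hsb
        rw [hstep s has hsb, dist_eq_norm, sub_sub_cancel, norm_smul, Real.norm_of_nonneg hα0]
        exact mul_le_mul hαA (hg s has hsb) (norm_nonneg _) (hα0.trans hαA)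
    _ = (b - a : ℕ) * (A * G) := by rw [sum_const, Nat.card_Ico, nsmul_eq_mul]

end GradientSteps

section WeightedSpread

variable {ι H : Type*} [Fintype ι] [NormedAddCommGroup H] [InnerProductSpace ℝ H]

theorem sum_mul_norm_sub_sq_eq_norm_sub_weightedMean_sq_add {w : ι → ℝ} (hw : ∑ i, w i = 1)
    (x : ι → H) (c : H) :
    ∑ i, w i * ‖c - x i‖ ^ 2
      = ‖c - ∑ j, w j • x j‖ ^ 2 + ∑ i, w i * ‖(∑ j, w j • x j) - x i‖ ^ 2 := by
  set d := ∑ j, w j • x j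
  have hcentered : ∑ i, w i • (d - x i) = 0 := by
    simp only [smul_sub, sum_sub_distrib, ← sum_smul, hw, one_smul, d, sub_self]
  have hsplit : ∀ i,
      ‖c - x i‖ ^ 2 = ‖c - d‖ ^ 2 + 2 * inner ℝ (c - d) (d - x i) + ‖d - x i‖ ^ 2 := fun i => by
    rw [← norm_add_sq_real, sub_add_sub_cancel]
  calc ∑ i, w i * ‖c - x i‖ ^ 2
      = (∑ i, w i) * ‖c - d‖ ^ 2 + 2 * inner ℝ (c - d) (∑ i, w i • (d - x i))
          + ∑ i, w i * ‖d - x i‖ ^ 2 := by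
        simp only [hsplit, inner_sum, real_inner_smul_right, mul_sum, sum_mul, ← sum_add_distrib]
        exact sum_congr rfl fun i _ => by ring
    _ = ‖c - d‖ ^ 2 + ∑ i, w i * ‖d - x i‖ ^ 2 := by
        rw [hw, hcentered, inner_zero_right]; ring

theorem sum_mul_norm_weightedMean_sub_sq_le {w : ι → ℝ} (hw0 : ∀ i, 0 ≤ w i)
    (hw : ∑ i, w i = 1) {x : ι → H} {c : H} {B : ℝ} (hx : ∀ i, ‖c - x i‖ ≤ B) :
    ∑ i, w i * ‖(∑ j, w j • x j) - x i‖ ^ 2 ≤ B ^ 2 :=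
  calc ∑ i, w i * ‖(∑ j, w j • x j) - x i‖ ^ 2
      ≤ ∑ i, w i * ‖c - x i‖ ^ 2 := by
        rw [sum_mul_norm_sub_sq_eq_norm_sub_weightedMean_sq_add hw x c]
        exact le_add_of_nonneg_left (sq_nonneg _)
    _ ≤ ∑ i, w i * B ^ 2 := by
        gcongr with i
        · exact hw0 i
        · exact hx i
    _ = B ^ 2 := by rw [← sum_mul, hw, one_mul]

end WeightedSpread

/-- Divergence-bounding lemma: local iterates `δ p` evolving by gradient steps
with non-increasing step sizes and gradients bounded by `G`, synchronized at a
step `t₀` with `t − t₀ ≤ E − 1` and `α t₀ ≤ 2 α t`, have weighted spread around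
their weighted average bounded by `4 α_t² (E − 1)² G²`. -/
theorem divergence_bound {H : Type*} [NormedAddCommGroup H] [InnerProductSpace ℝ H]
    (P : ℕ) (hP : 1 ≤ P)
    (w : Fin P → ℝ) (hw : ∀ p, 0 ≤ w p) (hwsum : ∑ p, w p = 1)
    (G : ℝ) (hG : 0 ≤ G) (E : ℕ) (hE : 1 ≤ E)
    (α : ℕ → ℝ) (hα0 : ∀ s : ℕ, 1 ≤ s → 0 ≤ α s)
    (hαmono : ∀ s t : ℕ, 1 ≤ s → s ≤ t → α t ≤ α s)
    (δ : Fin P → ℕ → H) (g : Fin P → ℕ → H)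
    (hstep : ∀ (p : Fin P) (s : ℕ), 1 ≤ s → δ p (s + 1) = δ p s - α s • g p s)
    (hgbound : ∀ (p : Fin P) (s : ℕ), 1 ≤ s → ‖g p s‖ ≤ G)
    (t₀ t : ℕ) (ht₀ : 1 ≤ t₀) (ht₀t : t₀ ≤ t) (htE : t - t₀ ≤ E - 1)
    (hsync : ∀ p q : Fin P, δ p t₀ = δ q t₀)
    (hαt : α t₀ ≤ 2 * α t) :
    ∑ p, w p * ‖(∑ q, w q • δ q t) - δ p t‖ ^ 2
      ≤ 4 * (α t) ^ 2 * ((E : ℝ) - 1) ^ 2 * G ^ 2 := by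
  have hsteps : ((t - t₀ : ℕ) : ℝ) ≤ (E : ℝ) - 1 := by
    rw [← Nat.cast_one, ← Nat.cast_sub hE]
    exact_mod_cast htE
  have hdrift : ∀ p, ‖δ ⟨0, hP⟩ t₀ - δ p t‖ ≤ 2 * α t * ((E : ℝ) - 1) * G := fun p =>
    calc ‖δ ⟨0, hP⟩ t₀ - δ p t‖ = ‖δ p t - δ p t₀‖ := by rw [hsync p, norm_sub_rev]
      _ ≤ (t - t₀ : ℕ) * (α t₀ * G) :=
        norm_sub_le_of_gradient_steps ht₀t
          (fun s hs _ => hstep p s (ht₀.trans hs))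
          (fun s hs _ => ⟨hα0 s (ht₀.trans hs), hαmono t₀ s ht₀ hs⟩)
          (fun s hs _ => hgbound p s (ht₀.trans hs))
      _ ≤ ((E : ℝ) - 1) * (2 * α t * G) := by
        have hαt₀ : 0 ≤ α t₀ := hα0 t₀ ht₀
        gcongr
        exact (Nat.cast_nonneg _).trans hsteps
      _ = 2 * α t * ((E : ℝ) - 1) * G := by ring
  calc ∑ p, w p * ‖(∑ q, w q • δ q t) - δ p t‖ ^ 2
      ≤ (2 * α t * ((E : ℝ) - 1) * G) ^ 2 :=
        sum_mul_norm_weightedMean_sub_sq_le hw hwsum hdrift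
    _ = 4 * (α t) ^ 2 * ((E : ℝ) - 1) ^ 2 * G ^ 2 := by ring
end

section
/- Let L ≥ μ > 0 be real numbers, let E ≥ 1 be a natural number, let B ≥ 0, set λ = max{8L/μ, E} − 1 and α_t = 2/(μ(λ + t)) for integers t ≥ 1. Let Δ : ℕ → ℝ be a sequence with Δ_t ≥ 0 for all t ≥ 1 satisfying Δ_{t+1} ≤ (1 − α_t μ) Δ_t + α_t² B for all t ≥ 1. Then for all t ≥ 1, Δ_t ≤ (4B/μ² + (λ + 1) Δ_1)/(λ + t). -/
/-! With step sizes `α_t = β/(λ + t)`, the bound `Δ_t ≤ v/(λ + t)` propagates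
through the recursion as soon as `v ≥ β²B/(βμ − 1)`: the contraction `1 − βμ/(λ + t)` beats the
loss from `1/(λ + t)` to `1/(λ + t + 1)` with exactly the margin needed to absorb the noise term
`β²B/(λ + t)²`. The base case holds when `v ≥ (λ + 1)Δ_1`. For `β = 2/μ` the noise threshold is
`4B/μ²`, so `v = 4B/μ² + (λ + 1)Δ_1` meets both requirements; `λ + 1 ≥ 8L/μ ≥ 8 ≥ βμ` keeps the
contraction factor nonnegative. -/

theorem contraction_step_le {μ β B v s : ℝ} (hs : 0 < s) (hv : 0 ≤ v)
    (hvB : β ^ 2 * B ≤ (β * μ - 1) * v) :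
    (1 - β / s * μ) * (v / s) + (β / s) ^ 2 * B ≤ v / (s + 1) := by
  have hgap : v / (s + 1) - ((1 - β / s * μ) * (v / s) + (β / s) ^ 2 * B)
      = (((β * μ - 1) * v - β ^ 2 * B) * (s + 1) + v) / (s ^ 2 * (s + 1)) := by
    field_simp
    ring
  have hnum : 0 ≤ ((β * μ - 1) * v - β ^ 2 * B) * (s + 1) + v := by
    have : 0 ≤ ((β * μ - 1) * v - β ^ 2 * B) * (s + 1) :=
      mul_nonneg (sub_nonneg.mpr hvB) (by linarith)
    linarith
  have := div_nonneg hnum (by positivity : (0 : ℝ) ≤ s ^ 2 * (s + 1))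
  linarith

theorem le_div_of_contraction_recursion {μ β B lam v : ℝ} {Δ : ℕ → ℝ}
    (hβμ : 0 < β * μ) (hlam : β * μ ≤ lam + 1) (hv : 0 ≤ v)
    (hvB : β ^ 2 * B ≤ (β * μ - 1) * v) (hv1 : (lam + 1) * Δ 1 ≤ v)
    (hrec : ∀ t : ℕ, 1 ≤ t →
      Δ (t + 1) ≤ (1 - β / (lam + t) * μ) * Δ t + (β / (lam + t)) ^ 2 * B) :
    ∀ t : ℕ, 1 ≤ t → Δ t ≤ v / (lam + t) := by
  intro t ht
  induction t, ht using Nat.le_induction with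
  | base =>
    rw [Nat.cast_one, le_div_iff₀ (by linarith)]
    linarith
  | succ n hn ih =>
    have hn1 : (1 : ℝ) ≤ n := by exact_mod_cast hn
    have hs : 0 < lam + n := by linarith
    have hcontr : 0 ≤ 1 - β / (lam + n) * μ := by
      rw [div_mul_eq_mul_div, sub_nonneg, div_le_one hs]
      linarith
    calc Δ (n + 1)
        ≤ (1 - β / (lam + n) * μ) * Δ n + (β / (lam + n)) ^ 2 * B := hrec n hn
      _ ≤ (1 - β / (lam + n) * μ) * (v / (lam + n)) + (β / (lam + n)) ^ 2 * B := by
        gcongr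
      _ ≤ v / (lam + n + 1) := contraction_step_le hs hv hvB
      _ = v / (lam + ↑(n + 1)) := by push_cast; ring_nf

theorem specialized_decay_bound_general (L μ B : ℝ) (hμ : 0 < μ) (hLμ : μ ≤ L)
    (E : ℕ) (hB : 0 ≤ B)
    (lam : ℝ) (hlam : lam = max (8 * L / μ) (E : ℝ) - 1)
    (α : ℕ → ℝ) (hα : ∀ t : ℕ, α t = 2 / (μ * (lam + (t : ℝ))))
    (Δ : ℕ → ℝ) (hΔnonneg : ∀ t : ℕ, 1 ≤ t → 0 ≤ Δ t)
    (hrec : ∀ t : ℕ, 1 ≤ t → Δ (t + 1) ≤ (1 - α t * μ) * Δ t + (α t) ^ 2 * B) :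
    ∀ t : ℕ, 1 ≤ t → Δ t ≤ (4 * B / μ ^ 2 + (lam + 1) * Δ 1) / (lam + (t : ℝ)) := by
  have hlam8 : 8 ≤ lam + 1 := by
    have : 8 ≤ 8 * L / μ := by rw [le_div_iff₀ hμ]; linarith
    rw [hlam]
    linarith [le_max_left (8 * L / μ) (E : ℝ)]
  have hbase : 0 ≤ (lam + 1) * Δ 1 := mul_nonneg (by linarith) (hΔnonneg 1 le_rfl)
  have hB' : 0 ≤ 4 * B / μ ^ 2 := by positivity
  have hβμ : 2 / μ * μ = 2 := div_mul_cancel₀ 2 hμ.ne'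
  have hnoise : (2 / μ) ^ 2 * B ≤ (2 / μ * μ - 1) * (4 * B / μ ^ 2 + (lam + 1) * Δ 1) := by
    rw [hβμ, div_pow, div_mul_eq_mul_div]
    linarith
  have hrec' : ∀ t : ℕ, 1 ≤ t → Δ (t + 1) ≤
      (1 - 2 / μ / (lam + t) * μ) * Δ t + (2 / μ / (lam + t)) ^ 2 * B := by
    simpa only [hα, div_div] using hrec
  exact le_div_of_contraction_recursion (by linarith) (by linarith) (by linarith) hnoise
    (by linarith) hrec'

/-- Specialized decay bound: with `λ = max{8L/μ, E} − 1` and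
`α_t = 2/(μ(λ + t))`, the recursion `Δ_{t+1} ≤ (1 − α_t μ) Δ_t + α_t² B`
yields `Δ_t ≤ (4B/μ² + (λ + 1)Δ_1)/(λ + t)` for all `t ≥ 1`. -/
theorem specialized_decay_bound (L μ B : ℝ) (hμ : 0 < μ) (hLμ : μ ≤ L)
    (E : ℕ) (hE : 1 ≤ E) (hB : 0 ≤ B)
    (lam : ℝ) (hlam : lam = max (8 * L / μ) (E : ℝ) - 1)
    (α : ℕ → ℝ) (hα : ∀ t : ℕ, α t = 2 / (μ * (lam + (t : ℝ))))
    (Δ : ℕ → ℝ) (hΔnonneg : ∀ t : ℕ, 1 ≤ t → 0 ≤ Δ t)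
    (hrec : ∀ t : ℕ, 1 ≤ t → Δ (t + 1) ≤ (1 - α t * μ) * Δ t + (α t) ^ 2 * B) :
    ∀ t : ℕ, 1 ≤ t → Δ t ≤ (4 * B / μ ^ 2 + (lam + 1) * Δ 1) / (lam + (t : ℝ)) :=
  specialized_decay_bound_general L μ B hμ hLμ E hB lam hlam α hα Δ hΔnonneg hrec
end

section
/- Let H be a real inner product space, let f : H → ℝ be differentiable with gradient ∇f satisfying the L-smoothness inequality f(v) ≤ f(w) + ⟨v − w, ∇f(w)⟩ + (L/2)‖v − w‖² for all v, w ∈ H, where L ≥ μ > 0, and let δ* ∈ H satisfy ∇f(δ*) = 0. Let E ≥ 1 be a natural number, B ≥ 0, set ξ = L/μ, λ = max{8L/μ, E} − 1, and α_t = 2/(μ(λ + t)) for integers t ≥ 1. Let (x_t)_{t ≥ 1} be a sequence in H such that Δ_t = ‖x_t − δ*‖² satisfies Δ_{t+1} ≤ (1 − α_t μ) Δ_t + α_t² B for all t ≥ 1. Then for every t ≥ 1, f(x_t) − f(δ*) ≤ (ξ/(λ + t)) · (2B/μ + (μ(λ + 1)/2) ‖x_1 − δ*‖²). -/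
/-!
Write `Δ_t = ‖x_t − δ*‖²` and `s = λ + t`. Since `α_t μ = 2/s` and `α_t² B = c/s²` with
`c = 4B/μ²`, the recursion reads `Δ_{t+1} ≤ (1 − 2/s) Δ_t + c/s²`; as `λ ≥ 7`, the factor
`1 − 2/s` is nonnegative and induction gives `Δ_t ≤ (c + (λ + 1) Δ_1)/(λ + t)`. At the critical
point `δ*` the smoothness inequality reduces to `f(x) − f(δ*) ≤ (L/2)‖x − δ*‖²`, which turns this
`O(1/t)` bound on `Δ_t` into the bound on the optimality gap.
-/

open InnerProductSpace
open scoped RealInnerProductSpace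

lemma one_sub_two_div_mul_div_add_div_sq_le {s c v : ℝ} (hs : 2 ≤ s) (hc : 0 ≤ c) (hcv : c ≤ v) :
    (1 - 2 / s) * (v / s) + c / s ^ 2 ≤ v / (s + 1) := by
  have hs0 : 0 < s := by linarith
  rw [show (1 - 2 / s) * (v / s) + c / s ^ 2 = ((s - 2) * v + c) / s ^ 2 by field_simp,
    div_le_div_iff₀ (by positivity) (by linarith)]
  nlinarith

theorem le_const_div_of_le_one_sub_two_div_mul_add {u : ℕ → ℝ} {lam c : ℝ} (hlam : 1 ≤ lam)
    (hc : 0 ≤ c) (hu₁ : 0 ≤ u 1)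
    (hu : ∀ t : ℕ, 1 ≤ t → u (t + 1) ≤ (1 - 2 / (lam + t)) * u t + c / (lam + t) ^ 2) :
    ∀ t : ℕ, 1 ≤ t → u t ≤ (c + (lam + 1) * u 1) / (lam + t) := by
  set v := c + (lam + 1) * u 1
  have hcv : c ≤ v := le_add_of_nonneg_right (by positivity)
  intro t ht
  induction t, ht using Nat.le_induction with
  | base =>
    rw [Nat.cast_one, le_div_iff₀ (by linarith)]
    linarith
  | succ t ht ih =>
    have hs : 2 ≤ lam + t := by
      have : (1 : ℝ) ≤ t := by exact_mod_cast ht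
      linarith
    have hcoef : 0 ≤ 1 - 2 / (lam + t) := by
      rw [sub_nonneg, div_le_one (by linarith)]
      exact hs
    calc u (t + 1) ≤ (1 - 2 / (lam + t)) * u t + c / (lam + t) ^ 2 := hu t ht
      _ ≤ (1 - 2 / (lam + t)) * (v / (lam + t)) + c / (lam + t) ^ 2 := by gcongr
      _ ≤ v / (lam + t + 1) := one_sub_two_div_mul_div_add_div_sq_le hs hc hcv
      _ = v / (lam + ↑(t + 1)) := by push_cast; ring

lemma sub_le_half_mul_norm_sub_sq_of_smooth {H : Type*} [NormedAddCommGroup H]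
    [InnerProductSpace ℝ H] {f : H → ℝ} {g : H → H} {L : ℝ}
    (hsmooth : ∀ v u : H, f v ≤ f u + ⟪v - u, g u⟫ + (L / 2) * ‖v - u‖ ^ 2)
    {δ : H} (hcrit : g δ = 0) (x : H) :
    f x - f δ ≤ (L / 2) * ‖x - δ‖ ^ 2 := by
  have := hsmooth x δ
  rw [hcrit, inner_zero_right] at this
  linarith

theorem trigger_convergence_general {H : Type*} [NormedAddCommGroup H] [InnerProductSpace ℝ H]
    (f : H → ℝ) (g : H → H) (L μ : ℝ) (hμ : 0 < μ) (hLμ : μ ≤ L)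
    (hsmooth : ∀ v u : H, f v ≤ f u + ⟪v - u, g u⟫ + (L / 2) * ‖v - u‖ ^ 2)
    (δstar : H) (hcrit : g δstar = 0)
    (E : ℕ) (B : ℝ) (hB : 0 ≤ B)
    (lam : ℝ) (hlam : lam = max (8 * L / μ) (E : ℝ) - 1)
    (α : ℕ → ℝ) (hα : ∀ t : ℕ, α t = 2 / (μ * (lam + (t : ℝ))))
    (x : ℕ → H)
    (hrec : ∀ t : ℕ, 1 ≤ t →
      ‖x (t + 1) - δstar‖ ^ 2 ≤ (1 - α t * μ) * ‖x t - δstar‖ ^ 2 + (α t) ^ 2 * B) :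
    ∀ t : ℕ, 1 ≤ t →
      f (x t) - f δstar ≤
        (L / μ) / (lam + (t : ℝ)) * (2 * B / μ + (μ * (lam + 1) / 2) * ‖x 1 - δstar‖ ^ 2) := by
  have hlam_one : 1 ≤ lam := by
    have : 8 ≤ 8 * L / μ := by rw [le_div_iff₀ hμ]; linarith
    linarith [le_max_left (8 * L / μ) (E : ℝ)]
  have hdist := le_const_div_of_le_one_sub_two_div_mul_add (u := fun t ↦ ‖x t - δstar‖ ^ 2)
    (c := 4 * B / μ ^ 2) hlam_one (by positivity) (by positivity) fun t ht ↦ by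
      have hs : 0 < lam + t := by positivity
      have hαμ : α t * μ = 2 / (lam + t) := by rw [hα]; field_simp
      have hα_sq : α t ^ 2 * B = 4 * B / μ ^ 2 / (lam + t) ^ 2 := by rw [hα]; field_simp; ring
      simpa only [hαμ, hα_sq] using hrec t ht
  intro t ht
  have hs : 0 < lam + t := by positivity
  calc f (x t) - f δstar ≤ (L / 2) * ‖x t - δstar‖ ^ 2 :=
        sub_le_half_mul_norm_sub_sq_of_smooth hsmooth hcrit _
    _ ≤ (L / 2) * ((4 * B / μ ^ 2 + (lam + 1) * ‖x 1 - δstar‖ ^ 2) / (lam + t)) := by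
        gcongr
        · linarith
        · exact hdist t ht
    _ = _ := by field_simp; ring

/-- Convergence theorem for trigger training: if `f` is `L`-smooth with critical
point `δ*`, and the iterates `x t` satisfy the one-step recursion
`‖x_{t+1} − δ*‖² ≤ (1 − α_t μ)‖x_t − δ*‖² + α_t² B` with `α_t = 2/(μ(λ + t))`
and `λ = max{8L/μ, E} − 1`, then
`f(x_t) − f(δ*) ≤ (ξ/(λ + t))(2B/μ + (μ(λ+1)/2)‖x_1 − δ*‖²)` where `ξ = L/μ`. -/
theorem trigger_convergence {H : Type*} [NormedAddCommGroup H] [InnerProductSpace ℝ H]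
    (f : H → ℝ) (g : H → H) (L μ : ℝ) (hμ : 0 < μ) (hLμ : μ ≤ L)
    (hgrad : ∀ x : H, HasFDerivAt f ((toDualMap ℝ H) (g x) : H →L[ℝ] ℝ) x)
    (hsmooth : ∀ v u : H, f v ≤ f u + ⟪v - u, g u⟫ + (L / 2) * ‖v - u‖ ^ 2)
    (δstar : H) (hcrit : g δstar = 0)
    (E : ℕ) (hE : 1 ≤ E) (B : ℝ) (hB : 0 ≤ B)
    (lam : ℝ) (hlam : lam = max (8 * L / μ) (E : ℝ) - 1)
    (α : ℕ → ℝ) (hα : ∀ t : ℕ, α t = 2 / (μ * (lam + (t : ℝ))))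
    (x : ℕ → H)
    (hrec : ∀ t : ℕ, 1 ≤ t →
      ‖x (t + 1) - δstar‖ ^ 2 ≤ (1 - α t * μ) * ‖x t - δstar‖ ^ 2 + (α t) ^ 2 * B) :
    ∀ t : ℕ, 1 ≤ t →
      f (x t) - f δstar ≤
        (L / μ) / (lam + (t : ℝ)) * (2 * B / μ + (μ * (lam + 1) / 2) * ‖x 1 - δstar‖ ^ 2) :=
  trigger_convergence_general f g L μ hμ hLμ hsmooth δstar hcrit E B hB lam hlam α hα x hrec
end
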